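/- arXiv:math/0105071 — 2 statements merged into one kernel-verified Lean document; each statement's English description precedes it below -/
import Mathlib

section
/- The dimension of the irreducible Temperley-Lieb module V_n^t equals C(n, (n−t)/2) − C(n, (n−t−2)/2), when n − t is even and nonnegative. -/
/-!
Remove the first boundary point. If it is unmatched, what remains is a diagram with one
unmatched point fewer. If it is matched with `j`, every point strictly between is matched, so
after the removal `j` is the least unmatched point; conversely a new first point may be matched
with the least unmatched point of any diagram. The numbers `d n t` of diagrams therefore obey
the ballot recursion `d (n+1) (t+1) = d n t + d n (t+2)`, `d (n+1) 0 = d n 1`, which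
`C(n,k) - C(n,k-1)` satisfies by Pascal's rule (and `C(2m+1,m+1) = C(2m+1,m)` when `t = 0`).
-/

theorem Nat.choose_succ_eq_ite_add (n k : ℕ) :
    (n + 1).choose k = (if k = 0 then 0 else n.choose (k - 1)) + n.choose k := by
  cases k with
  | zero => simp
  | succ k => simp [Nat.choose_succ_succ]

theorem ballot_add_choose_pred_eq_choose (b : ℕ → ℕ → ℕ) (h_zero : b 0 0 = 1)
    (h_lt : ∀ n t, n < t → b n t = 0) (h_succ_zero : ∀ n, b (n + 1) 0 = b n 1)
    (h_succ_succ : ∀ n t, b (n + 1) (t + 1) = b n t + b n (t + 2)) (n t k : ℕ)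
    (hn : n = t + 2 * k) :
    b n t + (if k = 0 then 0 else n.choose (k - 1)) = n.choose k := by
  induction n generalizing t k with
  | zero =>
    obtain ⟨rfl, rfl⟩ : t = 0 ∧ k = 0 := by omega
    simpa using h_zero
  | succ n ih =>
    rcases t with _ | t
    · obtain ⟨k, rfl, rfl⟩ : ∃ m, k = m + 1 ∧ n = 2 * m + 1 := ⟨k - 1, by omega, by omega⟩
      have ih₁ := ih 1 k (by omega)
      have := Nat.choose_symm_half k
      rw [h_succ_zero, if_neg k.succ_ne_zero, Nat.add_sub_cancel, Nat.choose_succ_eq_ite_add _ k,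
        Nat.choose_succ_succ']
      omega
    · rw [h_succ_succ]
      have ih₁ := ih t k (by omega)
      rcases k with _ | k
      · rw [h_lt n (t + 2) (by omega)]
        simpa using ih₁
      · have ih₂ := ih (t + 2) k (by omega)
        rw [if_neg k.succ_ne_zero, Nat.add_sub_cancel] at ih₁ ⊢
        rw [Nat.choose_succ_eq_ite_add n k, Nat.choose_succ_succ']
        omega

section

variable {n : ℕ}

theorem bind_finSuccEquiv_map_succ (x : Option (Fin n)) :
    (x.map Fin.succ).bind (finSuccEquiv n) = x := by
  cases x <;> simp

theorem map_succ_bind_finSuccEquiv {x : Option (Fin (n + 1))} (hx : x ≠ some 0) :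
    (x.bind (finSuccEquiv n)).map Fin.succ = x := by
  rcases x with _ | j
  · rfl
  · cases j using Fin.cases with
    | zero => exact absurd rfl hx
    | succ j => simp

theorem bind_finSuccEquiv_eq_some {x : Option (Fin (n + 1))} {j : Fin n} :
    x.bind (finSuccEquiv n) = some j ↔ x = some j.succ := by
  rcases x with _ | k
  · simp
  · cases k using Fin.cases <;> simp [eq_comm]

theorem bind_finSuccEquiv_eq_none {x : Option (Fin (n + 1))} :
    x.bind (finSuccEquiv n) = none ↔ x = none ∨ x = some 0 := by
  rcases x with _ | k
  · simp
  · cases k using Fin.cases <;> simp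

end

open Finset

namespace TemperleyLieb

variable {n : ℕ}

structure IsDiagram (f : Fin n → Option (Fin n)) : Prop where
  symm : ∀ i j, f i = some j → f j = some i ∧ j ≠ i
  matched_of_lt_of_lt : ∀ i j, f i = some j → ∀ l, i < l → l < j → f l ≠ none
  noncrossing : ∀ i j a b, f i = some j → f a = some b → ¬(i < a ∧ a < j ∧ j < b)

def numUnmatched (f : Fin n → Option (Fin n)) : ℕ := #{i | f i = none}

abbrev Diagram (n t : ℕ) : Type :=
  {f : Fin n → Option (Fin n) // IsDiagram f ∧ numUnmatched f = t}

/-- Deletes the point `0`; its partner, if any, becomes unmatched. -/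
def restrict (f : Fin (n + 1) → Option (Fin (n + 1))) (i : Fin n) : Option (Fin n) :=
  (f i.succ).bind (finSuccEquiv n)

def firstPartner (f : Fin (n + 1) → Option (Fin (n + 1))) : Option (Fin n) :=
  (f 0).bind (finSuccEquiv n)

def extend (g : Fin n → Option (Fin n)) (p : Option (Fin n)) :
    Fin (n + 1) → Option (Fin (n + 1)) :=
  Fin.cases (p.map Fin.succ) fun i => if p = some i then some 0 else (g i).map Fin.succ

section

variable {f : Fin (n + 1) → Option (Fin (n + 1))} {g : Fin n → Option (Fin n)}
  {p : Option (Fin n)}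

@[simp] theorem extend_zero : extend g p 0 = p.map Fin.succ := rfl

@[simp] theorem extend_succ (i : Fin n) :
    extend g p i.succ = if p = some i then some 0 else (g i).map Fin.succ := rfl

theorem restrict_extend (hp : ∀ i ∈ p, g i = none) : restrict (extend g p) = g := by
  funext i
  by_cases hi : p = some i
  · simp [restrict, hi, hp i hi]
  · simp [restrict, hi, bind_finSuccEquiv_map_succ]

theorem IsDiagram.extend_restrict (hf : IsDiagram f) :
    extend (restrict f) (firstPartner f) = f := by
  funext a
  cases a using Fin.cases with
  | zero =>
    exact map_succ_bind_finSuccEquiv fun h => (hf.symm 0 0 h).2 rfl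
  | succ i =>
    by_cases hi : firstPartner f = some i
    · rw [extend_succ, if_pos hi, (hf.symm _ _ (bind_finSuccEquiv_eq_some.1 hi)).1]
    · have hne : f i.succ ≠ some 0 := fun h => hi (bind_finSuccEquiv_eq_some.2 (hf.symm _ _ h).1)
      rw [extend_succ, if_neg hi]
      exact map_succ_bind_finSuccEquiv hne

protected theorem IsDiagram.restrict (hf : IsDiagram f) : IsDiagram (restrict f) where
  symm i j h := by
    obtain ⟨hji, hne⟩ := hf.symm _ _ (bind_finSuccEquiv_eq_some.1 h)
    exact ⟨bind_finSuccEquiv_eq_some.2 hji, fun h => hne (congrArg Fin.succ h)⟩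
  matched_of_lt_of_lt i j h l hil hlj hl := by
    have h := bind_finSuccEquiv_eq_some.1 h
    rcases bind_finSuccEquiv_eq_none.1 hl with hl | hl
    · exact hf.matched_of_lt_of_lt _ _ h l.succ (by simpa) (by simpa) hl
    · exact hf.noncrossing _ _ _ _ (hf.symm _ _ hl).1 h ⟨Fin.succ_pos i, by simpa, by simpa⟩
  noncrossing i j a b hij hab hc :=
    hf.noncrossing _ _ _ _ (bind_finSuccEquiv_eq_some.1 hij)
      (bind_finSuccEquiv_eq_some.1 hab) (by simpa using hc)

theorem extend_eq_some {a b : Fin (n + 1)} (h : extend g p a = some b) :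
    (∃ i, p = some i ∧ (a = 0 ∧ b = i.succ ∨ a = i.succ ∧ b = 0)) ∨
      ∃ i j, p ≠ some i ∧ g i = some j ∧ a = i.succ ∧ b = j.succ := by
  cases a using Fin.cases with
  | zero =>
    obtain ⟨i, hi, rfl⟩ := Option.map_eq_some_iff.1 h
    exact Or.inl ⟨i, hi, Or.inl ⟨rfl, rfl⟩⟩
  | succ i =>
    rw [extend_succ] at h
    split_ifs at h with hi
    · exact Or.inl ⟨i, hi, Or.inr ⟨rfl, (Option.some.inj h).symm⟩⟩
    · obtain ⟨j, hj, rfl⟩ := Option.map_eq_some_iff.1 h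
      exact Or.inr ⟨i, j, hi, hj, rfl, rfl⟩

theorem extend_succ_ne_none {i : Fin n} (h : g i ≠ none) : extend g p i.succ ≠ none := by
  rw [extend_succ]
  split_ifs
  · simp
  · simpa using h

protected theorem IsDiagram.extend (hg : IsDiagram g) (hp : ∀ i ∈ p, IsLeast {j | g j = none} i) :
    IsDiagram (extend g p) where
  symm a b h := by
    rcases extend_eq_some h with ⟨i, rfl, ⟨rfl, rfl⟩ | ⟨rfl, rfl⟩⟩ | ⟨i, j, hpi, hij, rfl, rfl⟩
    · exact ⟨by simp, Fin.succ_ne_zero i⟩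
    · exact ⟨by simp, (Fin.succ_ne_zero i).symm⟩
    · obtain ⟨hji, hne⟩ := hg.symm _ _ hij
      have hpj : p ≠ some j := fun h => Option.some_ne_none i (hji.symm.trans (hp j h).1)
      exact ⟨by simp [hpj, hji], by simpa using hne⟩
  matched_of_lt_of_lt a b h l hal hlb := by
    cases l using Fin.cases with
    | zero => exact absurd hal (Fin.not_lt_zero a)
    | succ l =>
      rcases extend_eq_some h with ⟨i, rfl, ⟨rfl, rfl⟩ | ⟨rfl, rfl⟩⟩ | ⟨i, j, -, hij, rfl, rfl⟩
      · exact extend_succ_ne_none fun hl => not_le.2 (by simpa using hlb) ((hp i rfl).2 hl)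
      · exact absurd hlb (Fin.not_lt_zero _)
      · exact extend_succ_ne_none (hg.matched_of_lt_of_lt i j hij l (by simpa using hal)
          (by simpa using hlb))
  noncrossing a b c d hab hcd := by
    rintro ⟨hac, hcb, hbd⟩
    rcases extend_eq_some hab with ⟨i, rfl, ⟨rfl, rfl⟩ | ⟨rfl, rfl⟩⟩ | ⟨i, j, -, hij, rfl, rfl⟩
    · rcases extend_eq_some hcd with ⟨_, -, ⟨rfl, -⟩ | ⟨-, rfl⟩⟩ | ⟨k, m, -, hkm, rfl, rfl⟩
      · exact lt_irrefl _ hac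
      · exact Fin.not_lt_zero _ hbd
      · exact hg.matched_of_lt_of_lt k m hkm i (by simpa using hcb) (by simpa using hbd)
          (hp i rfl).1
    · exact Fin.not_lt_zero _ hcb
    · rcases extend_eq_some hcd with ⟨_, -, ⟨rfl, -⟩ | ⟨-, rfl⟩⟩ | ⟨k, m, -, hkm, rfl, rfl⟩
      · exact Fin.not_lt_zero _ hac
      · exact Fin.not_lt_zero _ hbd
      · exact hg.noncrossing i j k m hij hkm
          ⟨by simpa using hac, by simpa using hcb, by simpa using hbd⟩

theorem numUnmatched_extend_none : numUnmatched (extend g none) = numUnmatched g + 1 := by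
  simp [numUnmatched, Fin.card_filter_univ_succ]

theorem numUnmatched_extend_some {i : Fin n} (hi : g i = none) :
    numUnmatched (extend g (some i)) + 1 = numUnmatched g := by
  have hset : ({j | extend g (some i) j.succ = none} : Finset (Fin n)) =
      ({j | g j = none} : Finset (Fin n)).erase i := by
    ext j
    by_cases hj : j = i
    · simp [hj]
    · simp [hj, Ne.symm hj]
  rw [numUnmatched, Fin.card_filter_univ_succ, if_neg (by simp), hset,
    card_erase_add_one (by simpa using hi), numUnmatched]

theorem IsDiagram.numUnmatched_eq_restrict_add_one (hf : IsDiagram f) (h0 : f 0 = none) :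
    numUnmatched f = numUnmatched (restrict f) + 1 := by
  have hp : firstPartner f = none := by simp [firstPartner, h0]
  conv_lhs => rw [← hf.extend_restrict, hp]
  exact numUnmatched_extend_none

theorem IsDiagram.exists_firstPartner_eq_some (hf : IsDiagram f) (h0 : f 0 ≠ none) :
    ∃ i, firstPartner f = some i := by
  obtain ⟨j, hj⟩ := Option.ne_none_iff_exists'.1 h0
  cases j using Fin.cases with
  | zero => exact absurd rfl (hf.symm _ _ hj).2
  | succ i => exact ⟨i, bind_finSuccEquiv_eq_some.2 hj⟩

theorem IsDiagram.isLeast_firstPartner (hf : IsDiagram f) :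
    ∀ i ∈ firstPartner f, IsLeast {j | restrict f j = none} i := by
  intro i hi
  have h0 : f 0 = some i.succ := bind_finSuccEquiv_eq_some.1 hi
  refine ⟨bind_finSuccEquiv_eq_none.2 (Or.inr (hf.symm _ _ h0).1), fun j hj => ?_⟩
  rcases bind_finSuccEquiv_eq_none.1 hj with hj | hj
  · exact not_lt.1 fun hji =>
      hf.matched_of_lt_of_lt 0 i.succ h0 j.succ (Fin.succ_pos j) (by simpa using hji) hj
  · have := (hf.symm _ _ hj).1
    rw [h0, Option.some_inj, Fin.succ_inj] at this
    exact this.le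

theorem IsDiagram.numUnmatched_restrict_eq_add_one (hf : IsDiagram f) (h0 : f 0 ≠ none) :
    numUnmatched (restrict f) = numUnmatched f + 1 := by
  obtain ⟨i, hi⟩ := hf.exists_firstPartner_eq_some h0
  conv_rhs => rw [← hf.extend_restrict, hi]
  exact (numUnmatched_extend_some (hf.isLeast_firstPartner i hi).1).symm

end

def firstUnmatched (g : Fin n → Option (Fin n)) (hg : 0 < numUnmatched g) : Fin n :=
  ({i | g i = none} : Finset (Fin n)).min' (card_pos.1 hg)

theorem isLeast_firstUnmatched {g : Fin n → Option (Fin n)} (hg : 0 < numUnmatched g) :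
    IsLeast {i | g i = none} (firstUnmatched g hg) := by
  have h := isLeast_min' _ (card_pos.1 hg)
  simp only [coe_filter, mem_univ, true_and] at h
  exact h

def diagramEquivOfZeroUnmatched (n t : ℕ) :
    {f : Diagram (n + 1) (t + 1) // f.1 0 = none} ≃ Diagram n t where
  toFun f := ⟨restrict f.1.1, f.1.2.1.restrict, by
    have := f.1.2.1.numUnmatched_eq_restrict_add_one f.2
    have := f.1.2.2
    omega⟩
  invFun g := ⟨⟨extend g.1 none, g.2.1.extend (p := none) (by simp), by
    rw [numUnmatched_extend_none, g.2.2]⟩, rfl⟩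
  left_inv f := by
    have hp : firstPartner f.1.1 = none := by simp [firstPartner, f.2]
    have := f.1.2.1.extend_restrict
    rw [hp] at this
    exact Subtype.ext (Subtype.ext this)
  right_inv g := Subtype.ext (restrict_extend (p := none) (by simp))

def diagramEquivOfZeroMatched (n t : ℕ) :
    {f : Diagram (n + 1) t // f.1 0 ≠ none} ≃ Diagram n (t + 1) where
  toFun f := ⟨restrict f.1.1, f.1.2.1.restrict, by
    rw [f.1.2.1.numUnmatched_restrict_eq_add_one f.2, f.1.2.2]⟩
  invFun g :=
    have hpos : 0 < numUnmatched g.1 := by rw [g.2.2]; exact t.succ_pos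
    have hleast := isLeast_firstUnmatched hpos
    ⟨⟨extend g.1 (some (firstUnmatched g.1 hpos)), g.2.1.extend (by simpa using hleast), by
      have := numUnmatched_extend_some hleast.1
      omega⟩, by simp⟩
  left_inv f := by
    obtain ⟨i, hi⟩ := f.1.2.1.exists_firstPartner_eq_some f.2
    have hfirst : ∀ h, firstUnmatched (restrict f.1.1) h = i := fun h =>
      (isLeast_firstUnmatched h).unique (f.1.2.1.isLeast_firstPartner i hi)
    refine Subtype.ext (Subtype.ext ?_)
    change extend (restrict f.1.1) (some (firstUnmatched _ _)) = f.1.1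
    conv_rhs => rw [← f.1.2.1.extend_restrict, hi]
    rw [hfirst]
  right_inv g := Subtype.ext (restrict_extend (by simpa using (isLeast_firstUnmatched _).1))

theorem card_diagram_succ (n t : ℕ) :
    Nat.card (Diagram (n + 1) t) = Nat.card {f : Diagram (n + 1) t // f.1 0 = none} +
      Nat.card {f : Diagram (n + 1) t // f.1 0 ≠ none} := by
  rw [← Nat.card_sum]
  exact Nat.card_congr (Equiv.sumCompl _).symm

theorem card_diagram_succ_succ (n t : ℕ) :
    Nat.card (Diagram (n + 1) (t + 1)) = Nat.card (Diagram n t) + Nat.card (Diagram n (t + 2)) := by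
  rw [card_diagram_succ, Nat.card_congr (diagramEquivOfZeroUnmatched n t),
    Nat.card_congr (diagramEquivOfZeroMatched n (t + 1))]

theorem card_diagram_succ_zero (n : ℕ) :
    Nat.card (Diagram (n + 1) 0) = Nat.card (Diagram n 1) := by
  have : IsEmpty {f : Diagram (n + 1) 0 // f.1 0 = none} :=
    ⟨fun f => by
      have h := f.1.2.2
      rw [numUnmatched, card_eq_zero, filter_eq_empty_iff] at h
      exact h (mem_univ 0) f.2⟩
  rw [card_diagram_succ, Nat.card_of_isEmpty, Nat.card_congr (diagramEquivOfZeroMatched n 0),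
    zero_add]

theorem card_diagram_zero_zero : Nat.card (Diagram 0 0) = 1 :=
  Nat.card_eq_one_iff_unique.2
    ⟨inferInstance, ⟨⟨finZeroElim, ⟨finZeroElim, finZeroElim, finZeroElim⟩, rfl⟩⟩⟩

theorem numUnmatched_le (f : Fin n → Option (Fin n)) : numUnmatched f ≤ n :=
  (card_filter_le _ _).trans_eq (card_fin n)

theorem card_diagram_of_lt {t : ℕ} (h : n < t) : Nat.card (Diagram n t) = 0 :=
  have : IsEmpty (Diagram n t) := ⟨fun f => (numUnmatched_le f.1).not_gt (f.2.2.symm ▸ h)⟩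
  Nat.card_of_isEmpty

end TemperleyLieb

/-- The dimension of the irreducible Temperley-Lieb module `V_n^t` is
`C(n, (n-t)/2) - C(n, (n-t-2)/2)`.  Here `V_n^t` is encoded by its basis: partial
non-crossing matchings of `n` points (the top boundary points; `f i = some j`
means points `i` and `j` are joined by an arc) with exactly `t` unmatched points
(the through strings), such that no unmatched point lies under an arc.  Writing
`n = t + 2k`, the count is `C(n,k) - C(n,k-1)` (the subtracted term being `0`
when `k = 0`), stated additively to avoid truncated subtraction. -/
theorem tl_module_dimension (n t k : ℕ) (hn : n = t + 2 * k) :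
    Nat.card {f : Fin n → Option (Fin n) //
      (∀ i j, f i = some j → f j = some i ∧ j ≠ i) ∧
      (∀ i j, f i = some j → ∀ l, i < l → l < j → f l ≠ none) ∧
      (∀ i j a b, f i = some j → f a = some b → ¬(i < a ∧ a < j ∧ j < b)) ∧
      Nat.card {i : Fin n // f i = none} = t} +
      (if k = 0 then 0 else n.choose (k - 1)) = n.choose k := by
  convert ballot_add_choose_pred_eq_choose (fun n t => Nat.card (TemperleyLieb.Diagram n t))
    TemperleyLieb.card_diagram_zero_zero (fun _ _ => TemperleyLieb.card_diagram_of_lt)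
    TemperleyLieb.card_diagram_succ_zero TemperleyLieb.card_diagram_succ_succ n t k hn using 2
  refine Nat.card_congr (Equiv.subtypeEquivRight fun f => ?_)
  rw [Nat.card_eq_fintype_card, Fintype.card_subtype]
  exact ⟨fun ⟨h₁, h₂, h₃, h₄⟩ => ⟨⟨h₁, h₂, h₃⟩, h₄⟩, fun ⟨⟨h₁, h₂, h₃⟩, h₄⟩ => ⟨h₁, h₂, h₃, h₄⟩⟩
end

section
/- Let x > 0 be real and let r, k be positive integers with m = r + k. Then for any complex numbers z₁, z₂ of absolute value 1, z₁·sinh((r+2k)x) + z₂·sinh(rx) ≠ sinh(2mx). -/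
/-!
Put `a = (r + 2k)x` and `b = rx`, so that `a + b = 2mx`. By the addition formula
`sinh (a + b) = sinh a cosh b + cosh a sinh b`, and `cosh > 1` away from `0`, the function
`sinh` is strictly superadditive on `(0, ∞)`. The triangle inequality bounds the left-hand side
by `sinh a + sinh b`, which is therefore strictly smaller than `sinh (a + b)`.
-/

open Real

lemma Real.sinh_add_sinh_lt_sinh_add {a b : ℝ} (ha : 0 < a) (hb : 0 < b) :
    sinh a + sinh b < sinh (a + b) := by
  have hsa : 0 < sinh a := sinh_pos_iff.mpr ha
  have hsb : 0 < sinh b := sinh_pos_iff.mpr hb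
  have hca : 1 < cosh a := one_lt_cosh.mpr ha.ne'
  have hcb : 1 < cosh b := one_lt_cosh.mpr hb.ne'
  calc sinh a + sinh b < sinh a * cosh b + cosh a * sinh b := by
        linarith [mul_lt_mul_of_pos_left hcb hsa, mul_lt_mul_of_pos_right hca hsb]
    _ = sinh (a + b) := (sinh_add a b).symm

lemma norm_mul_sinh_add_mul_sinh_lt {a b : ℝ} (ha : 0 < a) (hb : 0 < b) {z₁ z₂ : ℂ}
    (h₁ : ‖z₁‖ ≤ 1) (h₂ : ‖z₂‖ ≤ 1) :
    ‖z₁ * (sinh a : ℂ) + z₂ * (sinh b : ℂ)‖ < sinh (a + b) := by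
  have hnorm {z : ℂ} {t : ℝ} (hz : ‖z‖ ≤ 1) (ht : 0 < t) : ‖z * (sinh t : ℂ)‖ ≤ sinh t := by
    rw [norm_mul, Complex.norm_real, norm_of_nonneg (sinh_pos_iff.mpr ht).le]
    exact mul_le_of_le_one_left (sinh_pos_iff.mpr ht).le hz
  calc ‖z₁ * (sinh a : ℂ) + z₂ * (sinh b : ℂ)‖
      ≤ ‖z₁ * (sinh a : ℂ)‖ + ‖z₂ * (sinh b : ℂ)‖ := norm_add_le _ _
    _ ≤ sinh a + sinh b := add_le_add (hnorm h₁ ha) (hnorm h₂ hb)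
    _ < sinh (a + b) := sinh_add_sinh_lt_sinh_add ha hb

lemma mul_sinh_add_mul_sinh_ne_sinh_add {a b : ℝ} (ha : 0 < a) (hb : 0 < b) {z₁ z₂ : ℂ}
    (h₁ : ‖z₁‖ ≤ 1) (h₂ : ‖z₂‖ ≤ 1) :
    z₁ * (sinh a : ℂ) + z₂ * (sinh b : ℂ) ≠ (sinh (a + b) : ℂ) := by
  intro h
  have hlt := norm_mul_sinh_add_mul_sinh_lt ha hb h₁ h₂
  rw [h, Complex.norm_real, norm_eq_abs] at hlt
  exact (le_abs_self _).not_gt hlt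

theorem no_null_vector_general (x : ℝ) (hx : 0 < x) (r k m : ℕ)
    (hr : 1 ≤ r) (hm : m = r + k)
    (z₁ z₂ : ℂ) (h₁ : ‖z₁‖ = 1) (h₂ : ‖z₂‖ = 1) :
    z₁ * (Real.sinh ((r + 2 * k) * x) : ℂ) + z₂ * (Real.sinh (r * x) : ℂ) ≠
      (Real.sinh (2 * m * x) : ℂ) := by
  have hr' : (0 : ℝ) < r := by exact_mod_cast hr
  have hsum : ((r : ℝ) + 2 * k) * x + r * x = 2 * m * x := by
    subst hm
    push_cast
    ring
  rw [← hsum]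
  exact mul_sinh_add_mul_sinh_ne_sinh_add (by positivity) (by positivity) h₁.le h₂.le

/-- For `x > 0`, positive integers `r, k` with `m = r + k`, and unimodular
complex numbers `z₁, z₂`:
`z₁ sinh((r+2k)x) + z₂ sinh(rx) ≠ sinh(2mx)`. -/
theorem no_null_vector (x : ℝ) (hx : 0 < x) (r k m : ℕ)
    (hr : 1 ≤ r) (hk : 1 ≤ k) (hm : m = r + k)
    (z₁ z₂ : ℂ) (h₁ : ‖z₁‖ = 1) (h₂ : ‖z₂‖ = 1) :
    z₁ * (Real.sinh ((r + 2 * k) * x) : ℂ) + z₂ * (Real.sinh (r * x) : ℂ) ≠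
      (Real.sinh (2 * m * x) : ℂ) :=
  no_null_vector_general x hx r k m hr hm z₁ z₂ h₁ h₂
end
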